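/- arXiv:1510.04774 — 5 statements merged into one kernel-verified Lean document; each statement's English description precedes it below -/
import Mathlib

section
/- The function f defined by f(x)=0 for rational x and f(x)=x for irrational x is, for every n≥2, n times Riemann differentiable at 0 with n-th Riemann derivative 0 (i.e., lim_{h→0} (1/h^n)·∑_{k=0}^n (-1)^k C(n,k) f((n-k)h) = 0), but f is not differentiable at 0. -/
open Filter Finset

/-!
Rational multiples commute with `f`: `f (q * x) = q * f x` for `q ∈ ℚ`. Hence every Riemann
difference of `f` at `0` equals `f h` times the corresponding difference of the identity, which
vanishes for `n ≥ 2`. On the other hand `f` agrees with `0` on the dense set `ℚ` and with the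
identity on the dense set of irrationals, so a derivative at `0` would have to be both `0` and `1`.
-/

theorem Dense.uniqueDiffWithinAt {𝕜 E : Type*} [NontriviallyNormedField 𝕜] [NormedAddCommGroup E]
    [NormedSpace 𝕜 E] {s : Set E} (hs : Dense s) (x : E) : UniqueDiffWithinAt 𝕜 s x :=
  uniqueDiffWithinAt_univ.mono_closure (by rw [hs.closure_eq])

theorem HasDerivAt.eq_of_hasDerivWithinAt_of_dense {𝕜 F : Type*} [NontriviallyNormedField 𝕜]
    [NormedAddCommGroup F] [NormedSpace 𝕜 F] {f g : 𝕜 → F} {f' g' : F} {s : Set 𝕜} {x : 𝕜}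
    (hf : HasDerivAt f f' x) (hg : HasDerivWithinAt g g' s x) (hs : Dense s)
    (hfg : Set.EqOn f g s) (hx : f x = g x) : f' = g' :=
  (hs.uniqueDiffWithinAt x).eq_deriv s
    (hf.hasDerivWithinAt.congr (fun _ hy => (hfg hy).symm) hx.symm) hg

theorem sum_range_neg_one_pow_mul_choose_mul_sub_eq_zero {R : Type*} [CommRing R] {n : ℕ}
    (hn : 2 ≤ n) :
    ∑ k ∈ range (n + 1), (-1 : R) ^ k * n.choose k * ((n : R) - k) = 0 := by
  obtain ⟨m, rfl⟩ : ∃ m, n = m + 1 := ⟨n - 1, by omega⟩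
  have hm : m ≠ 0 := by omega
  have hterm : ∀ k ∈ range (m + 1 + 1),
      (-1 : R) ^ k * (m + 1).choose k * (((m + 1 : ℕ) : R) - k)
        = (m + 1) * ((-1 : R) ^ k * m.choose k) := by
    intro k hk
    have hk : k ≤ m + 1 := Nat.lt_succ_iff.mp (mem_range.mp hk)
    have hchoose := congrArg (Nat.cast : ℕ → R) (Nat.choose_mul_succ_eq m k)
    push_cast [Nat.cast_sub hk] at hchoose ⊢
    linear_combination (-1 : R) ^ k * hchoose.symm
  have halt : ∑ k ∈ range (m + 1), (-1 : R) ^ k * m.choose k = 0 := by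
    simpa using congrArg (Int.cast : ℤ → R) (Int.alternating_sum_range_choose_of_ne hm)
  rw [sum_congr rfl hterm, ← mul_sum, sum_range_succ, halt, Nat.choose_succ_self]
  simp

noncomputable def riemannDiff (n : ℕ) (f : ℝ → ℝ) (x h : ℝ) : ℝ :=
  ∑ k ∈ range (n + 1), (-1) ^ k * n.choose k * f (x + (n - k) * h)

open scoped Classical in
noncomputable def idOnIrrationals (x : ℝ) : ℝ := if Irrational x then x else 0

theorem idOnIrrationals_of_irrational {x : ℝ} (hx : Irrational x) : idOnIrrationals x = x :=
  if_pos hx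

@[simp]
theorem idOnIrrationals_ratCast (q : ℚ) : idOnIrrationals q = 0 :=
  if_neg (Rat.not_irrational q)

@[simp]
theorem idOnIrrationals_zero : idOnIrrationals 0 = 0 := by
  simpa using idOnIrrationals_ratCast 0

theorem idOnIrrationals_ratCast_mul (q : ℚ) (x : ℝ) :
    idOnIrrationals (q * x) = q * idOnIrrationals x := by
  by_cases hx : Irrational x
  · rcases eq_or_ne q 0 with rfl | hq
    · simp
    · rw [idOnIrrationals_of_irrational hx, idOnIrrationals_of_irrational (hx.ratCast_mul hq)]
  · obtain ⟨r, rfl⟩ := not_not.mp hx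
    rw [← Rat.cast_mul, idOnIrrationals_ratCast, idOnIrrationals_ratCast, mul_zero]

theorem not_differentiableAt_idOnIrrationals_zero : ¬ DifferentiableAt ℝ idOnIrrationals 0 := by
  intro hd
  have hzero : deriv idOnIrrationals 0 = 0 :=
    hd.hasDerivAt.eq_of_hasDerivWithinAt_of_dense (hasDerivWithinAt_const _ _ (0 : ℝ))
      Rat.denseRange_cast (by rintro _ ⟨q, rfl⟩; simp) idOnIrrationals_zero
  have hone : deriv idOnIrrationals 0 = 1 :=
    hd.hasDerivAt.eq_of_hasDerivWithinAt_of_dense (hasDerivWithinAt_id _ _) dense_irrational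
      (fun _ hy => idOnIrrationals_of_irrational hy) idOnIrrationals_zero
  exact zero_ne_one (hzero.symm.trans hone)

theorem riemannDiff_idOnIrrationals_zero {n : ℕ} (hn : 2 ≤ n) (h : ℝ) :
    riemannDiff n idOnIrrationals 0 h = 0 := by
  have hterm : ∀ k ∈ range (n + 1), idOnIrrationals (0 + (n - k) * h)
      = ((n : ℝ) - k) * idOnIrrationals h := fun k _ => by
    simpa using idOnIrrationals_ratCast_mul ((n : ℚ) - k) h
  unfold riemannDiff
  rw [sum_congr rfl fun k hk => by rw [hterm k hk, ← mul_assoc], ← sum_mul,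
    sum_range_neg_one_pow_mul_choose_mul_sub_eq_zero hn, zero_mul]

open scoped Classical in
theorem stmt_0 (f : ℝ → ℝ) (hf : ∀ x : ℝ, f x = if Irrational x then x else 0)
    (n : ℕ) (hn : 2 ≤ n) :
    Tendsto (fun h : ℝ =>
        (1 / h ^ n) * ∑ k ∈ Finset.range (n + 1),
          (-1 : ℝ) ^ k * (n.choose k : ℝ) * f (((n : ℝ) - (k : ℝ)) * h))
      (nhdsWithin 0 {0}ᶜ) (nhds 0)
    ∧ ¬ DifferentiableAt ℝ f 0 := by
  obtain rfl : f = idOnIrrationals := funext hf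
  refine ⟨tendsto_const_nhds.congr fun h => ?_, not_differentiableAt_idOnIrrationals_zero⟩
  have hdiff := riemannDiff_idOnIrrationals_zero hn h
  simp only [riemannDiff, zero_add] at hdiff
  rw [hdiff, mul_zero]
end

section
/- The indicator function of the rationals, f(x)=1 if x∈ℚ and f(x)=0 otherwise, has, at x=0, all odd-order symmetric Riemann derivatives existing (equal to 0), but no even-order symmetric Riemann derivative exists. -/
/-!
Let `Δₙ(h)` be the `n`-th symmetric difference at a rational point of the indicator of `ℚ`.
For rational `h` every node is rational, so `Δₙ(h)` is the alternating sum of the binomial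
coefficients, which vanishes. For irrational `h` the only rational node is the centre, which is a
node iff `n` is even: so `Δₙ(h) = 0` for odd `n`, while `Δₙ(h) = (-1)^m C(2m, m) ≠ 0` for `n = 2m`.
Hence `Δₙ(h) / hⁿ` vanishes identically for odd `n`; for even `n` it cannot converge, since then
`Δₙ(h) = hⁿ · (Δₙ(h) / hⁿ)` would tend to `0`, also along the irrationals.
-/

open Filter Finset Topology

noncomputable def symmRiemannDiff (f : ℝ → ℝ) (n : ℕ) (x h : ℝ) : ℝ :=
  ∑ k ∈ range (n + 1), (-1) ^ k * (n.choose k : ℝ) * f (x + ((n : ℝ) / 2 - k) * h)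

theorem symmRiemannDiff_const (c : ℝ) {n : ℕ} (hn : n ≠ 0) (x h : ℝ) :
    symmRiemannDiff (fun _ => c) n x h = 0 := by
  have := congrArg (fun m : ℤ => (m : ℝ) * c) (Int.alternating_sum_range_choose_of_ne hn)
  simpa [symmRiemannDiff, Finset.sum_mul] using this

noncomputable def ratIndicator : ℝ → ℝ :=
  (Set.range ((↑) : ℚ → ℝ)).indicator 1

theorem ratIndicator_ratCast (q : ℚ) : ratIndicator q = 1 :=
  Set.indicator_of_mem (Set.mem_range_self q) _

theorem ratIndicator_ratCast_add_ratCast_mul (x r : ℚ) {y : ℝ} (hy : Irrational y) :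
    ratIndicator (x + r * y) = if r = 0 then 1 else 0 := by
  split_ifs with hr
  · simpa [hr] using ratIndicator_ratCast x
  · exact Set.indicator_of_notMem ((hy.ratCast_mul hr).ratCast_add x) _

theorem symmRiemannDiff_ratIndicator_ratCast {n : ℕ} (hn : n ≠ 0) (x q : ℚ) :
    symmRiemannDiff ratIndicator n x q = 0 := by
  rw [← symmRiemannDiff_const 1 hn x q]
  refine sum_congr rfl fun k _ => ?_
  have hnode := ratIndicator_ratCast (x + (n / 2 - k) * q)
  push_cast at hnode
  rw [hnode]

theorem symmRiemannDiff_ratIndicator_of_irrational (n : ℕ) (x : ℚ) {y : ℝ} (hy : Irrational y) :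
    symmRiemannDiff ratIndicator n x y =
      ∑ k ∈ range (n + 1), if n = 2 * k then (-1) ^ k * (n.choose k : ℝ) else 0 := by
  refine sum_congr rfl fun k _ => ?_
  have hnode : ((n : ℝ) / 2 - k) = ((n / 2 - k : ℚ) : ℝ) := by push_cast; ring
  have hcentre : (n / 2 - k : ℚ) = 0 ↔ n = 2 * k := by
    rw [sub_eq_zero, div_eq_iff two_ne_zero]
    norm_cast
    omega
  rw [hnode, ratIndicator_ratCast_add_ratCast_mul x _ hy]
  simp only [hcentre]
  split_ifs <;> simp

theorem symmRiemannDiff_ratIndicator_of_odd {n : ℕ} (hn : Odd n) (x : ℚ) (h : ℝ) :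
    symmRiemannDiff ratIndicator n x h = 0 := by
  by_cases hh : Irrational h
  · rw [symmRiemannDiff_ratIndicator_of_irrational n x hh]
    refine sum_eq_zero fun k _ => if_neg ?_
    rintro rfl
    exact Nat.not_even_iff_odd.mpr hn (even_two_mul k)
  · obtain ⟨q, rfl⟩ := not_not.mp hh
    exact symmRiemannDiff_ratIndicator_ratCast hn.pos.ne' x q

theorem symmRiemannDiff_ratIndicator_two_mul_of_irrational (m : ℕ) (x : ℚ) {y : ℝ}
    (hy : Irrational y) :
    symmRiemannDiff ratIndicator (2 * m) x y = (-1) ^ m * ((2 * m).choose m : ℝ) := by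
  rw [symmRiemannDiff_ratIndicator_of_irrational _ x hy]
  simp only [Nat.mul_left_cancel_iff two_pos, sum_ite_eq, mem_range]
  exact if_pos (by omega)

theorem frequently_irrational_nhdsNE (x : ℝ) : ∃ᶠ y in 𝓝[≠] x, Irrational y :=
  frequently_nhdsWithin_iff.mpr <| mem_closure_iff_frequently.mp <|
    (dense_irrational.sdiff_singleton x).closure_eq ▸ Set.mem_univ x

theorem not_tendsto_one_div_pow_mul_of_frequently_eq {D : ℝ → ℝ} {n : ℕ} (hn : n ≠ 0) {c : ℝ}
    (hD : ∃ᶠ h in 𝓝[≠] 0, D h = c) (hc : c ≠ 0) (L : ℝ) :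
    ¬ Tendsto (fun h => 1 / h ^ n * D h) (𝓝[≠] 0) (𝓝 L) := by
  intro hL
  have hpow : Tendsto (fun h : ℝ => h ^ n) (𝓝[≠] 0) (𝓝 0) :=
    ((continuous_pow n).tendsto' 0 0 (zero_pow hn)).mono_left nhdsWithin_le_nhds
  have hD0 : Tendsto D (𝓝[≠] 0) (𝓝 0) := by
    refine (zero_mul L ▸ hpow.mul hL).congr' (eventually_nhdsWithin_of_forall fun h hh => ?_)
    field_simp [pow_ne_zero n hh]
  obtain ⟨h, hDc, hDne⟩ := (hD.and_eventually (hD0.eventually_ne hc.symm)).exists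
  exact hDne hDc

open scoped Classical in
theorem stmt_3 (f : ℝ → ℝ)
    (hf : ∀ x : ℝ, f x = if ∃ q : ℚ, (q : ℝ) = x then 1 else 0) :
    (∀ n : ℕ, Odd n →
      Tendsto (fun h : ℝ =>
          (1 / h ^ n) * ∑ k ∈ Finset.range (n + 1),
            (-1 : ℝ) ^ k * (n.choose k : ℝ) * f (((n : ℝ) / 2 - (k : ℝ)) * h))
        (nhdsWithin 0 {0}ᶜ) (nhds 0))
    ∧ (∀ n : ℕ, Even n → n ≠ 0 →
      ¬ ∃ L : ℝ, Tendsto (fun h : ℝ =>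
          (1 / h ^ n) * ∑ k ∈ Finset.range (n + 1),
            (-1 : ℝ) ^ k * (n.choose k : ℝ) * f (((n : ℝ) / 2 - (k : ℝ)) * h))
        (nhdsWithin 0 {0}ᶜ) (nhds L)) := by
  obtain rfl : f = ratIndicator := funext fun x => by
    simp [hf, ratIndicator, Set.indicator_apply]
  have hdiff (n : ℕ) (h : ℝ) : ∑ k ∈ range (n + 1),
      (-1 : ℝ) ^ k * (n.choose k : ℝ) * ratIndicator (((n : ℝ) / 2 - (k : ℝ)) * h) =
        symmRiemannDiff ratIndicator n (0 : ℚ) h := by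
    simp [symmRiemannDiff]
  simp only [hdiff]
  refine ⟨fun n hn => ?_, fun n hn hn0 => ?_⟩
  · simpa only [symmRiemannDiff_ratIndicator_of_odd hn, mul_zero] using tendsto_const_nhds
  · obtain ⟨m, rfl⟩ := hn.two_dvd
    rintro ⟨L, hL⟩
    refine not_tendsto_one_div_pow_mul_of_frequently_eq hn0
      ((frequently_irrational_nhdsNE 0).mono fun y hy =>
        symmRiemannDiff_ratIndicator_two_mul_of_irrational m 0 hy) ?_ L hL
    have hchoose : ((2 * m).choose m : ℝ) ≠ 0 :=
      Nat.cast_ne_zero.mpr (Nat.choose_pos (by omega)).ne'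
    exact mul_ne_zero (pow_ne_zero _ (by norm_num)) hchoose
end

section
/- Fix generalized Riemann differences 𝒜 of order m and ℬ of order n with m > n. Let K be the subfield of ℝ generated over ℚ by all nodes a_i of 𝒜 and b_i of ℬ, and define f(x) = x^m if x ∈ K and f(x) = 0 otherwise. Then the ℬ-derivative of f at 0 exists and equals 0, but the 𝒜-derivative of f at 0 does not exist; moreover f is Lebesgue measurable. -/
/-!
On the field `K` the function `f` is `x ↦ x ^ m`, and `K` is closed under multiplication by the
nodes and by their inverses, so `∑ C i * f (c i * h) = (∑ C i * c i ^ m) * f h` for every `h`.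
The `ℬ`-quotient is therefore `O(|h| ^ (m - n))`, while by the moment condition the
`𝒜`-quotient equals `m!` on `K` and `0` off `K`. Both `K` (it contains `ℚ`) and its complement
(`K` is countable) are dense, so the `𝒜`-quotient has no limit at `0`.
-/

open Filter Topology Set

namespace Subfield

variable {F : Type*} [Field F]

theorem countable_closure {s : Set F} (hs : s.Countable) : (closure s : Set F).Countable :=
  Cardinal.le_aleph0_iff_set_countable.mp <|
    (cardinalMk_closure_le_max s).trans (max_le hs.le_aleph0 le_rfl)

variable (K : Subfield F) {m : ℕ}

theorem indicator_pow_mul_of_mem (hm : m ≠ 0) {c : F} (hc : c ∈ K) (h : F) :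
    (K : Set F).indicator (· ^ m) (c * h) = c ^ m * (K : Set F).indicator (· ^ m) h := by
  rcases eq_or_ne c 0 with rfl | hc0
  · simp [zero_pow hm]
  have hmem : c * h ∈ K ↔ h ∈ K :=
    ⟨fun hch => by simpa [hc0] using K.mul_mem (K.inv_mem hc) hch, K.mul_mem hc⟩
  by_cases hh : h ∈ K
  · simp [indicator_of_mem, hh, hmem.2 hh, mul_pow]
  · simp [indicator_of_notMem, hh, mt hmem.1 hh]

theorem sum_mul_indicator_pow_mul (hm : m ≠ 0) {ι : Type*} (s : Finset ι) (C c : ι → F)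
    (hc : ∀ i ∈ s, c i ∈ K) (h : F) :
    ∑ i ∈ s, C i * (K : Set F).indicator (· ^ m) (c i * h) =
      (∑ i ∈ s, C i * c i ^ m) * (K : Set F).indicator (· ^ m) h := by
  rw [Finset.sum_mul]
  refine Finset.sum_congr rfl fun i hi => ?_
  rw [K.indicator_pow_mul_of_mem hm (hc i hi), mul_assoc]

end Subfield

theorem tendsto_mul_indicator_pow_div_pow (S : Set ℝ) {m n : ℕ} (hnm : n < m) (C : ℝ) :
    Tendsto (fun h => C * S.indicator (· ^ m) h / h ^ n) (𝓝[≠] 0) (𝓝 0) := by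
  have hbound : ∀ᶠ h : ℝ in 𝓝[≠] 0,
      ‖C * S.indicator (· ^ m) h / h ^ n‖ ≤ ‖C‖ * ‖h‖ ^ (m - n) := by
    filter_upwards [self_mem_nhdsWithin] with h hh
    calc ‖C * S.indicator (· ^ m) h / h ^ n‖
        ≤ ‖C‖ * ‖h‖ ^ m / ‖h‖ ^ n := by
          rw [norm_div, norm_mul, norm_pow]
          gcongr
          simpa using norm_indicator_le_norm_self (· ^ m) h
      _ = ‖C‖ * ‖h‖ ^ (m - n) := by
          rw [pow_sub₀ _ (norm_ne_zero_iff.2 hh) hnm.le, mul_div_assoc, div_eq_mul_inv]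
  refine squeeze_zero_norm' hbound (tendsto_nhdsWithin_of_tendsto_nhds ?_)
  exact (continuous_const.mul (continuous_norm.pow (m - n))).tendsto' 0 0
    (by simp [zero_pow (Nat.sub_ne_zero_of_lt hnm)])

theorem not_exists_tendsto_indicator_const {X M : Type*} [TopologicalSpace X] [T1Space X]
    [TopologicalSpace M] [T2Space M] [Zero M] {s : Set X} (hs : Dense s) (hs' : Dense sᶜ)
    (x : X) [NeBot (𝓝[≠] x)] {c : M} (hc : c ≠ 0) :
    ¬ ∃ L, Tendsto (s.indicator fun _ => c) (𝓝[≠] x) (𝓝 L) := by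
  rintro ⟨L, hL⟩
  have limit_eq {t : Set X} (ht : Dense t) {v : M}
      (hv : EqOn (s.indicator fun _ => c) (fun _ => v) t) : L = v := by
    have := mem_closure_iff_nhdsWithin_neBot.1 (ht.sdiff_singleton x x)
    refine tendsto_nhds_unique (hL.mono_left (nhdsWithin_mono _ (sdiff_subset_compl t {x}))) ?_
    exact tendsto_const_nhds.congr' (eventually_nhdsWithin_of_forall fun y hy => (hv hy.1).symm)
  exact hc ((limit_eq hs fun y hy => indicator_of_mem hy _).symm.trans
    (limit_eq hs' fun y hy => indicator_of_notMem hy _))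

open scoped Classical in
theorem stmt_10_general (m n : ℕ) (hmn : n < m)
    (p q : ℕ) (A a : Fin p → ℝ)
    (B b : Fin q → ℝ)
    (hVA : ∀ j ≤ m, ∑ i, A i * a i ^ j = if j = m then ((Nat.factorial m : ℕ) : ℝ) else 0)
    (K : Subfield ℝ) (hK : K = Subfield.closure (Set.range a ∪ Set.range b))
    (f : ℝ → ℝ) (hf : ∀ x : ℝ, f x = if x ∈ K then x ^ m else 0) :
    Tendsto (fun h : ℝ => (∑ i, B i * f (b i * h)) / h ^ n)
        (nhdsWithin 0 {0}ᶜ) (nhds 0)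
    ∧ (¬ ∃ L : ℝ, Tendsto (fun h : ℝ => (∑ i, A i * f (a i * h)) / h ^ m)
        (nhdsWithin 0 {0}ᶜ) (nhds L))
    ∧ Measurable f := by
  have hm : m ≠ 0 := by omega
  obtain rfl : f = (K : Set ℝ).indicator (· ^ m) := funext fun x => by simp [hf, indicator_apply]
  have haK : ∀ i, a i ∈ K := fun i => hK ▸ Subfield.subset_closure (Or.inl ⟨i, rfl⟩)
  have hbK : ∀ i, b i ∈ K := fun i => hK ▸ Subfield.subset_closure (Or.inr ⟨i, rfl⟩)
  have hKc : (K : Set ℝ).Countable :=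
    hK ▸ Subfield.countable_closure ((countable_range a).union (countable_range b))
  refine ⟨?_, ?_, (measurable_id.pow_const m).indicator hKc.measurableSet⟩
  · simp_rw [K.sum_mul_indicator_pow_mul hm _ _ _ fun i _ => hbK i]
    exact tendsto_mul_indicator_pow_div_pow _ hmn _
  · have hKdense : Dense (K : Set ℝ) :=
      Rat.denseRange_cast.mono (range_subset_iff.2 fun r => SubfieldClass.ratCast_mem K r)
    have hquot : (fun h => (∑ i, A i * (K : Set ℝ).indicator (· ^ m) (a i * h)) / h ^ m)
        =ᶠ[𝓝[≠] 0] (K : Set ℝ).indicator fun _ => (m.factorial : ℝ) := by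
      filter_upwards [self_mem_nhdsWithin] with h hh
      rw [K.sum_mul_indicator_pow_mul hm _ _ _ fun i _ => haK i, hVA m le_rfl, if_pos rfl]
      by_cases hhK : h ∈ K
      · simp [indicator_of_mem, hhK, pow_ne_zero m (show h ≠ 0 from hh)]
      · simp [indicator_of_notMem, hhK]
    rintro ⟨L, hL⟩
    exact not_exists_tendsto_indicator_const hKdense (hKc.dense_compl ℝ) 0
      (by positivity) ⟨L, hL.congr' hquot⟩

open scoped Classical in
theorem stmt_10 (m n : ℕ) (hmn : n < m)
    (p q : ℕ) (A a : Fin p → ℝ) (ha : Function.Injective a)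
    (B b : Fin q → ℝ) (hb : Function.Injective b)
    (hVA : ∀ j ≤ m, ∑ i, A i * a i ^ j = if j = m then ((Nat.factorial m : ℕ) : ℝ) else 0)
    (hVB : ∀ j ≤ n, ∑ i, B i * b i ^ j = if j = n then ((Nat.factorial n : ℕ) : ℝ) else 0)
    (K : Subfield ℝ) (hK : K = Subfield.closure (Set.range a ∪ Set.range b))
    (f : ℝ → ℝ) (hf : ∀ x : ℝ, f x = if x ∈ K then x ^ m else 0) :
    Tendsto (fun h : ℝ => (∑ i, B i * f (b i * h)) / h ^ n)
        (nhdsWithin 0 {0}ᶜ) (nhds 0)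
    ∧ (¬ ∃ L : ℝ, Tendsto (fun h : ℝ => (∑ i, A i * f (a i * h)) / h ^ m)
        (nhdsWithin 0 {0}ᶜ) (nhds L))
    ∧ Measurable f :=
  stmt_10_general m n hmn p q A a B b hVA K hK f hf
end

section
/- Let K be a subfield of ℝ and m > n ≥ 1. For f(x) = x^m if x∈K, f(x)=0 otherwise: if all nodes b_i of an n-th generalized Riemann difference ℬ lie in K, then lim_{h→0, h∈K} Δ_ℬ f(0,h)/h^n = 0 and lim_{h→0, h∉K} Δ_ℬ f(0,h)/h^n = 0, hence D_ℬ f(0) = 0. -/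
open Filter Finset

open scoped Classical in
theorem stmt_11 (K : Subfield ℝ) (m n : ℕ) (hmn : n < m) (hn : 1 ≤ n)
    (p : ℕ) (B b : Fin p → ℝ) (hb : Function.Injective b)
    (hbK : ∀ i, b i ∈ K)
    (hVB : ∀ j ≤ n, ∑ i, B i * b i ^ j = if j = n then ((Nat.factorial n : ℕ) : ℝ) else 0)
    (f : ℝ → ℝ) (hf : ∀ x : ℝ, f x = if x ∈ K then x ^ m else 0) :
    Tendsto (fun h : ℝ => (∑ i, B i * f (b i * h)) / h ^ n)
        (nhdsWithin 0 ((K : Set ℝ) \ {0})) (nhds 0)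
    ∧ Tendsto (fun h : ℝ => (∑ i, B i * f (b i * h)) / h ^ n)
        (nhdsWithin 0 ((K : Set ℝ)ᶜ)) (nhds 0)
    ∧ Tendsto (fun h : ℝ => (∑ i, B i * f (b i * h)) / h ^ n)
        (nhdsWithin 0 {0}ᶜ) (nhds 0) := by
  set C : ℝ := ∑ i, B i * b i ^ m with hC
  have h1 : Tendsto (fun h : ℝ => (∑ i, B i * f (b i * h)) / h ^ n)
      (nhdsWithin 0 ((K : Set ℝ) \ {0})) (nhds 0) := by
    have key : ∀ h ∈ (K : Set ℝ) \ {0},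
        C * h ^ (m - n) = (∑ i, B i * f (b i * h)) / h ^ n := by
      intro h hh
      obtain ⟨hK, h0⟩ := hh
      have h0 : h ≠ 0 := h0
      have hfi : ∀ i, f (b i * h) = b i ^ m * h ^ m := by
        intro i
        rw [hf, if_pos (mul_mem (hbK i) hK), mul_pow]
      have : (∑ i, B i * f (b i * h)) = C * h ^ m := by
        rw [hC, Finset.sum_mul]
        refine Finset.sum_congr rfl fun i _ => ?_
        rw [hfi i, mul_assoc]
      rw [this, eq_div_iff (pow_ne_zero _ h0), mul_assoc, ← pow_add,
        Nat.sub_add_cancel hmn.le]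
    have hcont : Tendsto (fun h : ℝ => C * h ^ (m - n)) (nhds 0) (nhds 0) := by
      have : Tendsto (fun h : ℝ => C * h ^ (m - n)) (nhds 0) (nhds (C * (0:ℝ) ^ (m - n))) :=
        ((continuous_const.mul (continuous_pow (m - n))).tendsto (0 : ℝ))
      simpa [zero_pow (Nat.sub_ne_zero_of_lt hmn)] using this
    exact (tendsto_nhdsWithin_congr key (hcont.mono_left nhdsWithin_le_nhds))
  have h2 : Tendsto (fun h : ℝ => (∑ i, B i * f (b i * h)) / h ^ n)
      (nhdsWithin 0 ((K : Set ℝ)ᶜ)) (nhds 0) := by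
    have key : ∀ h ∈ ((K : Set ℝ)ᶜ),
        (0 : ℝ) = (∑ i, B i * f (b i * h)) / h ^ n := by
      intro h hh
      have : ∀ i, f (b i * h) = 0 := by
        intro i
        rcases eq_or_ne (b i) 0 with hbi | hbi
        · rw [hbi, zero_mul, hf, if_pos (zero_mem K), zero_pow (by omega)]
        · rw [hf, if_neg]
          intro hmem
          exact hh (by simpa [hbi] using mul_mem (inv_mem (hbK i)) hmem)
      simp [this]
    exact tendsto_nhdsWithin_congr key tendsto_const_nhds
  refine ⟨h1, h2, ?_⟩
  have hsub : ({0}ᶜ : Set ℝ) ⊆ ((K : Set ℝ) \ {0}) ∪ ((K : Set ℝ)ᶜ) := by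
    intro x hx
    by_cases hxK : x ∈ (K : Set ℝ)
    · exact Or.inl ⟨hxK, hx⟩
    · exact Or.inr hxK
  have := (h1.sup h2)
  rw [← nhdsWithin_union] at this
  exact this.mono_left (nhdsWithin_mono _ hsub)
end

section
/- The difference Δ_𝒜 f(h) = (f(2h) − 2f(h) + 2f(−h) − f(−2h))/2 cannot be written as a finite linear combination ∑_{i=1}^k λ_i Δ_3^s f(r_i h) of dilates of the third symmetric Riemann difference Δ_3^s f(h) = f(3h/2) − 3f(h/2) + 3f(−h/2) − f(−3h/2), as an identity of formal differences (i.e., as an equality of finitely supported coefficient functions on ℝ in the variable giving the node multiplying h). -/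
open Finset Complex

noncomputable def ww (x : ℝ) : ℂ :=
  if x = 0 then 0 else (x : ℂ) * Complex.exp (2 * Real.pi * Real.log |x| / Real.log 3 * Complex.I)

lemma ww_odd (x : ℝ) : ww (-x) = - ww x := by
  unfold ww
  by_cases hx : x = 0
  · simp [hx]
  · rw [if_neg (neg_ne_zero.mpr hx), if_neg hx, abs_neg]
    push_cast; ring

lemma log3_pos : (0:ℝ) < Real.log 3 := Real.log_pos (by norm_num)

lemma ww_three (x : ℝ) : ww (3 * x) = 3 * ww x := by
  unfold ww
  by_cases hx : x = 0
  · simp [hx]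
  · have h3x : (3:ℝ) * x ≠ 0 := by simp [hx]
    rw [if_neg h3x, if_neg hx]
    have hlog : Real.log |3*x| = Real.log 3 + Real.log |x| := by
      rw [abs_mul, show |(3:ℝ)| = 3 by norm_num,
        Real.log_mul (by norm_num) (abs_ne_zero.mpr hx)]
    have h3c : ((Real.log 3 : ℝ) : ℂ) ≠ 0 := Complex.ofReal_ne_zero.mpr log3_pos.ne'
    have key : (2 * (Real.pi:ℂ) * ((Real.log |3*x| : ℝ):ℂ) / ((Real.log 3 : ℝ):ℂ) * Complex.I)
        = 2 * (Real.pi:ℂ) * ((Real.log |x| : ℝ):ℂ) / ((Real.log 3:ℝ):ℂ) * Complex.I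
          + 2 * (Real.pi:ℂ) * Complex.I := by
      have hdiv : (((Real.log 3:ℝ):ℂ) + ((Real.log |x|:ℝ):ℂ)) / ((Real.log 3:ℝ):ℂ)
          = ((Real.log |x|:ℝ):ℂ) / ((Real.log 3:ℝ):ℂ) + 1 := by
        rw [add_div, div_self h3c, add_comm]
      rw [hlog, Complex.ofReal_add, mul_div_assoc, hdiv]
      ring
    rw [key, Complex.exp_add, Complex.exp_two_pi_mul_I, mul_one]
    push_cast; ring

lemma ww_one : ww 1 = 1 := by
  simp [ww]

lemma ww_two_ne : ww 2 ≠ 2 := by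
  unfold ww
  rw [if_neg (by norm_num : (2:ℝ) ≠ 0)]
  intro h
  have h2 : Complex.exp (2 * Real.pi * Real.log |(2:ℝ)| / Real.log 3 * Complex.I) = 1 := by
    apply mul_left_cancel₀ (show ((2:ℝ):ℂ) ≠ 0 by norm_num)
    rw [h, mul_one]; norm_num
  rw [Complex.exp_eq_one_iff] at h2
  obtain ⟨n, hn⟩ := h2
  have hI : (2 * (Real.pi:ℂ) * Complex.I : ℂ) ≠ 0 := by
    simp [Real.pi_ne_zero, Complex.I_ne_zero]
  have hL : ((Real.log |(2:ℝ)| / Real.log 3 : ℝ) : ℂ) = (n:ℂ) := by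
    apply mul_right_cancel₀ hI
    rw [← hn, Complex.ofReal_div]; ring
  have hLr : Real.log |(2:ℝ)| / Real.log 3 = (n:ℝ) := by
    exact_mod_cast hL
  have h01 : (0:ℝ) < Real.log |(2:ℝ)| / Real.log 3 := by
    rw [show |(2:ℝ)| = 2 by norm_num]
    exact div_pos (Real.log_pos (by norm_num)) log3_pos
  have h02 : Real.log |(2:ℝ)| / Real.log 3 < 1 := by
    rw [show |(2:ℝ)| = 2 by norm_num, div_lt_one log3_pos]
    exact Real.log_lt_log (by norm_num) (by norm_num)
  rw [hLr] at h01 h02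
  have hn1 : (0:ℤ) < n := by exact_mod_cast h01
  have hn2 : (n:ℤ) < 1 := by exact_mod_cast h02
  omega

lemma sum_supp4 (T : Finset ℝ) (a b : ℝ) (A B : ℂ) (g w : ℝ → ℂ)
    (h1 : a ≠ b) (h2 : a ≠ -b) (h3 : a ≠ -a) (h4 : b ≠ -b)
    (ma : a ∈ T) (mb : b ∈ T) (mb' : -b ∈ T) (ma' : -a ∈ T)
    (hg : ∀ c, g c = if c = a then A else if c = b then B else
        if c = -b then -B else if c = -a then -A else 0) :
    ∑ c ∈ T, g c * w c = A * w a + B * w b + (-B) * w (-b) + (-A) * w (-a) := by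
  classical
  have hba : b ≠ -a := fun h => h2 (by rw [h, neg_neg])
  have hbma : -b ≠ -a := fun h => h1 (neg_injective h).symm
  have hab2 : -a ≠ -b := fun h => h1 (neg_injective h)
  have hzero : ∀ c ∈ T, c ∉ ({a, b, -b, -a} : Finset ℝ) → g c * w c = 0 := by
    intro c _ hc
    simp only [Finset.mem_insert, Finset.mem_singleton, not_or] at hc
    rw [hg]
    simp [hc.1, hc.2.1, hc.2.2.1, hc.2.2.2]
  have hsub : ({a, b, -b, -a} : Finset ℝ) ⊆ T := by
    intro c hc
    simp only [Finset.mem_insert, Finset.mem_singleton] at hc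
    rcases hc with rfl|rfl|rfl|rfl <;> assumption
  rw [← Finset.sum_subset hsub hzero]
  have e1 : a ∉ ({b, -b, -a} : Finset ℝ) := by
    simp only [Finset.mem_insert, Finset.mem_singleton]
    push_neg
    exact ⟨h1, h2, h3⟩
  have e2 : b ∉ ({-b, -a} : Finset ℝ) := by
    simp only [Finset.mem_insert, Finset.mem_singleton]
    push_neg
    exact ⟨h4, hba⟩
  have e3 : (-b) ∉ ({-a} : Finset ℝ) := by
    simp only [Finset.mem_singleton]
    exact hbma
  rw [show ({a, b, -b, -a} : Finset ℝ) = insert a (insert b (insert (-b) {-a})) from rfl,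
    Finset.sum_insert e1, Finset.sum_insert e2, Finset.sum_insert e3, Finset.sum_singleton,
    hg a, hg b, hg (-b), hg (-a),
    if_pos rfl, if_neg h1.symm, if_pos rfl,
    if_neg (Ne.symm h2), if_neg (Ne.symm h4), if_pos rfl,
    if_neg (Ne.symm h3), if_neg (Ne.symm hba), if_neg hab2, if_pos rfl]
  ring

open scoped Classical in
theorem stmt_13
    (dA : ℝ → ℝ)
    (hdA : ∀ c : ℝ, dA c = if c = 2 then 1/2 else if c = 1 then -1 else
        if c = -1 then 1 else if c = -2 then -1/2 else 0)
    (dS : ℝ → ℝ → ℝ)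
    (hdS : ∀ r c : ℝ, dS r c = if c = 3*r/2 then 1 else if c = r/2 then -3 else
        if c = -r/2 then 3 else if c = -(3*r/2) then -1 else 0) :
    ¬ ∃ (k : ℕ) (lam r : Fin k → ℝ), (∀ s, r s ≠ 0) ∧
        ∀ c : ℝ, dA c = ∑ s, lam s * dS (r s) c := by
  rintro ⟨k, lam, r, hr, heq⟩
  set N : Fin k → Finset ℝ :=
    fun s => {3 * r s / 2, r s / 2, -(r s / 2), -(3 * r s / 2)} with hN
  set T : Finset ℝ :=
    insert 2 (insert 1 (insert (-1) (insert (-2) (Finset.univ.biUnion N)))) with hT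
  have m2 : (2:ℝ) ∈ T := by simp [hT]
  have m1 : (1:ℝ) ∈ T := by simp [hT]
  have m1' : (-1:ℝ) ∈ T := by simp [hT]
  have m2' : (-2:ℝ) ∈ T := by simp [hT]
  have mnode : ∀ s, ∀ x ∈ N s, x ∈ T := by
    intro s x hx
    have : x ∈ Finset.univ.biUnion N := Finset.mem_biUnion.mpr ⟨s, Finset.mem_univ s, hx⟩
    simp only [hT, Finset.mem_insert]
    tauto
  -- coefficient function of dA in the required shape
  have hgA : ∀ c : ℝ, ((dA c : ℝ) : ℂ) = if c = 2 then (1/2:ℂ) else if c = 1 then -1 else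
      if c = -1 then -(-1) else if c = -2 then -(1/2) else 0 := by
    intro c
    rw [hdA]
    split_ifs <;> norm_num
  have L1 := sum_supp4 T 2 1 (1/2) (-1) (fun c => ((dA c : ℝ):ℂ)) ww
    (by norm_num) (by norm_num) (by norm_num) (by norm_num) m2 m1 m1' m2' hgA
  -- each dilate sums to zero
  have L2 : ∀ s : Fin k, ∑ c ∈ T, ((dS (r s) c : ℝ):ℂ) * ww c = 0 := by
    intro s
    have hrs := hr s
    have hgs : ∀ c : ℝ, ((dS (r s) c : ℝ) : ℂ) =
        if c = 3 * r s / 2 then (1:ℂ) else if c = r s / 2 then -3 else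
        if c = -(r s / 2) then -(-3) else if c = -(3 * r s / 2) then -1 else 0 := by
      intro c
      rw [hdS]
      rw [show -(r s) / 2 = -(r s / 2) from neg_div _ _]
      split_ifs <;> norm_num
    have h1 : 3 * r s / 2 ≠ r s / 2 := fun h => hrs (by linarith [h])
    have h2 : 3 * r s / 2 ≠ -(r s / 2) := fun h => hrs (by linarith [h])
    have h3 : 3 * r s / 2 ≠ -(3 * r s / 2) := fun h => hrs (by linarith [h])
    have h4 : r s / 2 ≠ -(r s / 2) := fun h => hrs (by linarith [h])
    have ms1 : 3 * r s / 2 ∈ T := mnode s _ (by simp [hN])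
    have ms2 : r s / 2 ∈ T := mnode s _ (by simp [hN])
    have ms3 : -(r s / 2) ∈ T := mnode s _ (by simp [hN])
    have ms4 : -(3 * r s / 2) ∈ T := mnode s _ (by simp [hN])
    have := sum_supp4 T (3 * r s / 2) (r s / 2) 1 (-3) (fun c => ((dS (r s) c : ℝ):ℂ)) ww
      h1 h2 h3 h4 ms1 ms2 ms3 ms4 hgs
    rw [this, ww_odd, ww_odd,
      show ww (3 * r s / 2) = 3 * ww (r s / 2) by
        rw [show 3 * r s / 2 = 3 * (r s / 2) by ring, ww_three]]
    ring
  -- the two evaluations of the functional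
  have hswap : ∑ c ∈ T, ((dA c : ℝ):ℂ) * ww c = 0 := by
    calc ∑ c ∈ T, ((dA c : ℝ):ℂ) * ww c
        = ∑ c ∈ T, ∑ s, (lam s : ℂ) * (((dS (r s) c : ℝ):ℂ) * ww c) := by
          refine Finset.sum_congr rfl fun c _ => ?_
          rw [heq c]
          push_cast
          rw [Finset.sum_mul]
          exact Finset.sum_congr rfl fun s _ => mul_assoc _ _ _
      _ = ∑ s, ∑ c ∈ T, (lam s : ℂ) * (((dS (r s) c : ℝ):ℂ) * ww c) := Finset.sum_comm
      _ = ∑ s : Fin k, (0:ℂ) := by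
          refine Finset.sum_congr rfl fun s _ => ?_
          rw [← Finset.mul_sum, L2 s, mul_zero]
      _ = 0 := by simp
  rw [L1] at hswap
  rw [ww_odd, ww_odd, ww_one] at hswap
  apply ww_two_ne
  have : ww 2 = 2 := by linear_combination hswap
  exact this
end
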